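/- Let Σ be an n × n symmetric positive definite matrix, μ = N(0, Σ), and let A ⊆ ℝ^n be a monotone (increasing or decreasing) Borel set. Then for every v ∈ ℝ^n and every i ∈ {1,…,n}, the limit lim_{r↓0} [μ(A + [−r,r]e_i + [−r,r]v) − μ(A + [−r,r]v)]/r exists and equals I_{i,μ}(A) := liminf_{r↓0} [μ(A + [−r,r]e_i) − μ(A)]/r. -/

import Mathlib

open MeasureTheory ENNReal

/-- Density of the Gaussian distribution `N(m, S)` on `ι → ℝ` (for `S` positive definite). -/
noncomputable def gaussianPdf {ι : Type*} [Fintype ι] [DecidableEq ι]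
    (m : ι → ℝ) (S : Matrix ι ι ℝ) (x : ι → ℝ) : ℝ :=
  Real.exp (-(dotProduct (x - m) (Matrix.mulVec S⁻¹ (x - m))) / 2) /
    Real.sqrt ((2 * Real.pi) ^ (Fintype.card ι) * S.det)

/-- The Gaussian measure `N(m, S)` on `ι → ℝ`, defined via its density. -/
noncomputable def gaussianMeasure {ι : Type*} [Fintype ι] [DecidableEq ι]
    (m : ι → ℝ) (S : Matrix ι ι ℝ) : Measure (ι → ℝ) :=
  volume.withDensity fun x => ENNReal.ofReal (gaussianPdf m S x)

/-- `A + [−r,r]v = {a + t·v : a ∈ A, |t| ≤ r}`. -/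
def thicken {ι : Type*} (A : Set (ι → ℝ)) (v : ι → ℝ) (r : ℝ) : Set (ι → ℝ) :=
  {x | ∃ a ∈ A, ∃ t : ℝ, |t| ≤ r ∧ x = a + t • v}

/-- The influence of the vector `v` on the Borel set `A` under the measure `μ`:
`I_{v,μ}(A) = liminf_{r↓0} (μ(A + [−r,r]v) − μ(A))/r ∈ [0,+∞]`. -/
noncomputable def influence {ι : Type*} (μ : MeasureTheory.Measure (ι → ℝ))
    (v : ι → ℝ) (A : Set (ι → ℝ)) : ℝ≥0∞ :=
  Filter.liminf (fun r : ℝ => (μ (thicken A v r) - μ A) / ENNReal.ofReal r)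
    (nhdsWithin 0 (Set.Ioi 0))

/-- A set `A ⊆ ℝ^ι` is increasing if `x ∈ A` and `x ≤ y` coordinatewise imply `y ∈ A`. -/
def IncreasingSet {ι : Type*} (A : Set (ι → ℝ)) : Prop :=
  ∀ x ∈ A, ∀ y : ι → ℝ, x ≤ y → y ∈ A

/-- A set `A ⊆ ℝ^ι` is decreasing if `x ∈ A` and `y ≤ x` coordinatewise imply `y ∈ A`. -/
def DecreasingSet {ι : Type*} (A : Set (ι → ℝ)) : Prop :=
  ∀ x ∈ A, ∀ y : ι → ℝ, y ≤ x → y ∈ A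

/-!
For a monotone set `B`, thickening in the direction `eᵢ ≥ 0` is a translation:
`B + [-r,r]eᵢ = B - r eᵢ` if `B` is increasing and `B + r eᵢ` if it is decreasing. Both
difference quotients are therefore integrals `∫_B (φ(y - r u) - φ(y)) / r dy` of slopes of the
Gaussian density `φ`, with `u = ±eᵢ` and `B = A`, resp. `B = A + [-r,r]v`. The slopes converge to
`(u ⬝ Σ⁻¹ y) φ(y)` and are dominated by `C (φ(y - 2u) + φ(y + 2u))`, and `A + [-r,r]v` converges to
`A` at every point off the frontier of `A`, which is Lebesgue-null since `A` is monotone. Dominated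
convergence gives the same limit for both quotients; in particular the liminf defining the
influence is a limit.
-/

open Filter Set Topology Matrix

lemma withDensity_ofReal_preimage_add_right {G : Type*} [MeasurableSpace G] [AddGroup G]
    [MeasurableAdd G] {ν : Measure G} [ν.IsAddRightInvariant] [SFinite ν] {f : G → ℝ}
    (hf : Integrable f ν) (hf0 : 0 ≤ f) (c : G) (D : Set G) :
    ν.withDensity (fun x => ENNReal.ofReal (f x)) ((· + c) ⁻¹' D) =
      ENNReal.ofReal (∫ y in D, f (y - c) ∂ν) := by
  rw [withDensity_apply',
    ofReal_integral_eq_lintegral_ofReal (hf.comp_sub_right c).integrableOn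
      (Eventually.of_forall fun y => hf0 (y - c)),
    ← (measurePreserving_add_right ν c).setLIntegral_comp_preimage_emb
      (MeasurableEquiv.addRight c).measurableEmbedding fun y => ENNReal.ofReal (f (y - c))]
  simp

lemma withDensity_ofReal_preimage_add_right_sub {G : Type*} [MeasurableSpace G] [AddGroup G]
    [MeasurableAdd G] {ν : Measure G} [ν.IsAddRightInvariant] [SFinite ν] {f : G → ℝ}
    (hf : Integrable f ν) (hf0 : 0 ≤ f) (c : G) (D : Set G) :
    ν.withDensity (fun x => ENNReal.ofReal (f x)) ((· + c) ⁻¹' D) -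
        ν.withDensity (fun x => ENNReal.ofReal (f x)) D =
      ENNReal.ofReal (∫ y in D, (f (y - c) - f y) ∂ν) := by
  have h0 := withDensity_ofReal_preimage_add_right hf hf0 0 D
  simp only [add_zero, preimage_id', sub_zero] at h0
  rw [withDensity_ofReal_preimage_add_right hf hf0, h0,
    ← ENNReal.ofReal_sub _ (setIntegral_nonneg_of_ae (Eventually.of_forall fun _ => hf0 _)),
    integral_sub (hf.comp_sub_right c).integrableOn hf.integrableOn]

theorem tendsto_setIntegral_of_dominated {α ι' E : Type*} [MeasurableSpace α]
    {μ : Measure α} [NormedAddCommGroup E] [NormedSpace ℝ E] {l : Filter ι'}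
    [l.IsCountablyGenerated] {F : ι' → α → E} {f : α → E} {D : ι' → Set α} {A : Set α}
    (g : α → ℝ) (hF : ∀ᶠ i in l, AEStronglyMeasurable (F i) μ)
    (hD : ∀ᶠ i in l, NullMeasurableSet (D i) μ) (hA : NullMeasurableSet A μ)
    (hg : Integrable g μ) (hFg : ∀ᶠ i in l, ∀ᵐ a ∂μ, ‖F i a‖ ≤ g a)
    (hFf : ∀ᵐ a ∂μ, Tendsto (fun i => F i a) l (𝓝 (f a)))
    (hDA : ∀ᵐ a ∂μ, ∀ᶠ i in l, a ∈ D i ↔ a ∈ A) :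
    Tendsto (fun i => ∫ a in D i, F i a ∂μ) l (𝓝 (∫ a in A, f a ∂μ)) := by
  have hlim : ∀ᵐ a ∂μ, Tendsto (fun i => (D i).indicator (F i) a) l (𝓝 (A.indicator f a)) := by
    filter_upwards [hFf, hDA] with a hFa hDa
    by_cases ha : a ∈ A
    · rw [indicator_of_mem ha]
      exact hFa.congr' (hDa.mono fun i hi => (indicator_of_mem (hi.2 ha) _).symm)
    · rw [indicator_of_notMem ha]
      exact tendsto_const_nhds.congr'
        (hDa.mono fun i hi => (indicator_of_notMem (mt hi.1 ha) _).symm)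
  rw [← integral_indicator₀ hA]
  refine (tendsto_integral_filter_of_dominated_convergence g
    ((hF.and hD).mono fun i h => h.1.indicator₀ h.2)
    (hFg.mono fun i h => h.mono fun a ha => (norm_indicator_le_norm_self _ _).trans ha)
    hg hlim).congr' ?_
  filter_upwards [hD] with i hi using integral_indicator₀ hi

lemma Real.abs_exp_sub_one_le_abs_mul_exp_abs (x : ℝ) :
    |Real.exp x - 1| ≤ |x| * Real.exp |x| := by
  rcases le_or_gt 0 x with hx | hx
  · have h : (1 - x) * Real.exp x ≤ 1 := by
      have := mul_le_mul_of_nonneg_right (Real.add_one_le_exp (-x)) (Real.exp_pos x).le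
      rwa [← Real.exp_add, neg_add_cancel, Real.exp_zero, neg_add_eq_sub] at this
    rw [abs_of_nonneg hx, abs_of_nonneg (by linarith [Real.add_one_le_exp x])]
    linarith
  · rw [abs_of_neg hx, abs_of_nonpos (by linarith [Real.exp_lt_one_iff.2 hx])]
    nlinarith [Real.add_one_le_exp x, Real.one_le_exp (neg_nonneg.2 hx.le)]

lemma Real.abs_exp_sub_one_le_mul_exp {x r a : ℝ} (ha : 0 ≤ a) (hr0 : 0 ≤ r) (hr1 : r ≤ 1)
    (hx : |x| ≤ r * a) : |Real.exp x - 1| ≤ r * Real.exp (2 * a) := by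
  have hxa : |x| ≤ a := hx.trans (mul_le_of_le_one_left ha hr1)
  calc |Real.exp x - 1| ≤ |x| * Real.exp |x| := Real.abs_exp_sub_one_le_abs_mul_exp_abs x
    _ ≤ (r * a) * Real.exp a := by gcongr
    _ ≤ r * (Real.exp a * Real.exp a) := by
        rw [mul_assoc]; gcongr; linarith [Real.add_one_le_exp a]
    _ = r * Real.exp (2 * a) := by rw [← Real.exp_add, two_mul]

lemma exists_pos_mul_norm_sq_le {E : Type*} [NormedAddCommGroup E] [NormedSpace ℝ E]
    [FiniteDimensional ℝ E] {q : E → ℝ} (hq : Continuous q)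
    (hq_smul : ∀ (t : ℝ) x, q (t • x) = t ^ 2 * q x) (hq_pos : ∀ x ≠ 0, 0 < q x) :
    ∃ ε > 0, ∀ x, ε * ‖x‖ ^ 2 ≤ q x := by
  have hq0 : q 0 = 0 := by simpa using hq_smul 0 0
  rcases subsingleton_or_nontrivial E with hE | hE
  · exact ⟨1, one_pos, fun x => by simp [Subsingleton.elim x 0, hq0]⟩
  obtain ⟨z, hz, hmin⟩ := (isCompact_sphere (0 : E) 1).exists_isMinOn
    (NormedSpace.sphere_nonempty.2 zero_le_one) hq.continuousOn
  have hz0 : z ≠ 0 := ne_zero_of_mem_unit_sphere ⟨z, hz⟩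
  refine ⟨q z, hq_pos z hz0, fun x => ?_⟩
  rcases eq_or_ne x 0 with rfl | hx
  · simp [hq0]
  have hx' : ‖x‖ ≠ 0 := norm_ne_zero_iff.2 hx
  have hmem : ‖x‖⁻¹ • x ∈ Metric.sphere (0 : E) 1 := by
    simp [norm_smul, hx']
  calc q z * ‖x‖ ^ 2 ≤ q (‖x‖⁻¹ • x) * ‖x‖ ^ 2 := by gcongr; exact hmin hmem
    _ = q x := by rw [hq_smul]; field_simp

lemma Matrix.PosDef.exists_pos_mul_sum_sq_le {ι : Type*} [Fintype ι] {M : Matrix ι ι ℝ}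
    (hM : M.PosDef) : ∃ ε > 0, ∀ x : ι → ℝ, ε * ∑ j, x j ^ 2 ≤ x ⬝ᵥ M *ᵥ x := by
  obtain ⟨ε, hε, h⟩ := exists_pos_mul_norm_sq_le (E := EuclideanSpace ℝ ι)
    (q := fun z => z.ofLp ⬝ᵥ M *ᵥ z.ofLp) (by fun_prop)
    (fun t z => by simp [Matrix.mulVec_smul]; ring)
    (fun z hz => by simpa using hM.dotProduct_mulVec_pos (x := z.ofLp) (by simpa using hz))
  refine ⟨ε, hε, fun x => ?_⟩
  simpa [EuclideanSpace.norm_sq_eq] using h (WithLp.toLp 2 x)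

lemma integrable_exp_neg_mul_sum_sq {ι : Type*} [Fintype ι] {a : ℝ} (ha : 0 < a) :
    Integrable fun x : ι → ℝ => Real.exp (-a * ∑ j, x j ^ 2) := by
  simp_rw [Finset.mul_sum, Real.exp_sum]
  exact Integrable.fintype_prod fun _ => integrable_exp_neg_mul_sq ha

lemma Matrix.IsSymm.dotProduct_mulVec_sub_smul {ι : Type*} [Fintype ι] {M : Matrix ι ι ℝ}
    (hM : M.IsSymm) (y u : ι → ℝ) (s : ℝ) :
    (y - s • u) ⬝ᵥ M *ᵥ (y - s • u) =
      y ⬝ᵥ M *ᵥ y - 2 * s * (u ⬝ᵥ M *ᵥ y) + s ^ 2 * (u ⬝ᵥ M *ᵥ u) := by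
  have hyu : y ⬝ᵥ M *ᵥ u = u ⬝ᵥ M *ᵥ y := by
    rw [dotProduct_mulVec, ← mulVec_transpose, hM.eq, dotProduct_comm]
  simp only [mulVec_sub, mulVec_smul, sub_dotProduct, dotProduct_sub, smul_dotProduct,
    dotProduct_smul, smul_eq_mul, hyu]
  ring

section Thicken

variable {ι : Type*} {A : Set (ι → ℝ)}

lemma IncreasingSet.isUpperSet (hA : IncreasingSet A) : IsUpperSet A :=
  fun _ _ hxy hx => hA _ hx _ hxy

lemma DecreasingSet.isLowerSet (hA : DecreasingSet A) : IsLowerSet A :=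
  fun _ _ hxy hx => hA _ hx _ hxy

lemma IsUpperSet.thicken (hA : IsUpperSet A) (v : ι → ℝ) (r : ℝ) :
    IsUpperSet (thicken A v r) := by
  rintro x y hxy ⟨a, ha, t, ht, rfl⟩
  exact ⟨a + (y - (a + t • v)), hA (le_add_of_nonneg_right (sub_nonneg.2 hxy)) ha, t, ht,
    by abel⟩

lemma IsLowerSet.thicken (hA : IsLowerSet A) (v : ι → ℝ) (r : ℝ) :
    IsLowerSet (thicken A v r) := by
  rintro x y hxy ⟨a, ha, t, ht, rfl⟩
  exact ⟨a + (y - (a + t • v)), hA (add_le_of_nonpos_right (sub_nonpos.2 hxy)) ha, t, ht,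
    by abel⟩

lemma IsUpperSet.thicken_eq_preimage (hA : IsUpperSet A) {w : ι → ℝ} (hw : 0 ≤ w) {r : ℝ}
    (hr : 0 ≤ r) : _root_.thicken A w r = (· + r • w) ⁻¹' A := by
  ext x
  constructor
  · rintro ⟨a, ha, t, ht, rfl⟩
    refine hA ?_ ha
    show a ≤ a + t • w + r • w
    rw [add_assoc, ← add_smul]
    exact le_add_of_nonneg_right (smul_nonneg (by linarith [neg_abs_le t]) hw)
  · exact fun hx => ⟨_, hx, -r, by rw [abs_neg, abs_of_nonneg hr], by simp⟩

lemma IsLowerSet.thicken_eq_preimage (hA : IsLowerSet A) {w : ι → ℝ} (hw : 0 ≤ w) {r : ℝ}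
    (hr : 0 ≤ r) : _root_.thicken A w r = (· + r • -w) ⁻¹' A := by
  ext x
  constructor
  · rintro ⟨a, ha, t, ht, rfl⟩
    refine hA ?_ ha
    show a + t • w + r • -w ≤ a
    rw [smul_neg, ← sub_eq_add_neg, add_sub_assoc, ← sub_smul]
    exact add_le_of_nonpos_right (smul_nonpos_of_nonpos_of_nonneg (by linarith [le_abs_self t]) hw)
  · exact fun hx => ⟨_, hx, r, by rw [abs_of_nonneg hr], by simp⟩

lemma eventually_mem_thicken_iff {x : ι → ℝ} (hx : x ∉ frontier A) (v : ι → ℝ) :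
    ∀ᶠ r in 𝓝[>] 0, x ∈ thicken A v r ↔ x ∈ A := by
  by_cases hxA : x ∈ A
  · filter_upwards [self_mem_nhdsWithin] with r hr
    exact iff_of_true ⟨x, hxA, 0, by simpa using hr.le, by simp⟩ hxA
  have hxA' : x ∉ closure A := fun h => hx ⟨h, fun hi => hxA (interior_subset hi)⟩
  have hnear : ∀ᶠ t in 𝓝 (0 : ℝ), x - t • v ∉ closure A := by
    have hcont : Continuous fun t : ℝ => x - t • v := by fun_prop
    exact hcont.continuousAt.preimage_mem_nhds
      (isClosed_closure.isOpen_compl.mem_nhds (by simpa using hxA'))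
  obtain ⟨ρ, hρ, hball⟩ := Metric.eventually_nhds_iff.1 hnear
  filter_upwards [Ioo_mem_nhdsGT hρ] with r hr
  refine iff_of_false ?_ hxA
  rintro ⟨a, ha, t, ht, rfl⟩
  refine hball (y := t) (lt_of_le_of_lt ?_ hr.2) (by simpa using subset_closure ha)
  simpa [Real.dist_eq] using ht

end Thicken

section Gaussian

variable {ι : Type*} [Fintype ι] [DecidableEq ι] {S : Matrix ι ι ℝ}

lemma gaussianPdf_nonneg (S : Matrix ι ι ℝ) (x : ι → ℝ) : 0 ≤ gaussianPdf 0 S x := by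
  unfold gaussianPdf; positivity

lemma continuous_gaussianPdf (S : Matrix ι ι ℝ) : Continuous (gaussianPdf 0 S) := by
  unfold gaussianPdf; fun_prop

lemma gaussianPdf_sub_smul (hS : S.IsSymm) (y u : ι → ℝ) (s : ℝ) :
    gaussianPdf 0 S (y - s • u) = gaussianPdf 0 S y *
      Real.exp (s * (u ⬝ᵥ S⁻¹ *ᵥ y) - s ^ 2 * (u ⬝ᵥ S⁻¹ *ᵥ u) / 2) := by
  unfold gaussianPdf
  rw [sub_zero, sub_zero, hS.inv.dotProduct_mulVec_sub_smul, div_mul_eq_mul_div, ← Real.exp_add]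
  ring_nf

lemma integrable_gaussianPdf (hS : S.PosDef) : Integrable (gaussianPdf 0 S) := by
  obtain ⟨ε, hε, hq⟩ := Matrix.PosDef.exists_pos_mul_sum_sq_le hS.inv
  refine ((integrable_exp_neg_mul_sum_sq (half_pos hε)).const_mul
    (Real.sqrt ((2 * Real.pi) ^ Fintype.card ι * S.det))⁻¹).mono'
    (continuous_gaussianPdf S).aestronglyMeasurable (Eventually.of_forall fun x => ?_)
  rw [Real.norm_of_nonneg (gaussianPdf_nonneg S x), gaussianPdf, sub_zero, div_eq_inv_mul]
  gcongr
  linarith [hq x]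

lemma gaussianPdf_mul_exp_abs_le (hS : S.IsSymm) (y u : ι → ℝ) (c : ℝ) :
    gaussianPdf 0 S y * Real.exp |c * (u ⬝ᵥ S⁻¹ *ᵥ y)| ≤
      Real.exp (c ^ 2 * (u ⬝ᵥ S⁻¹ *ᵥ u) / 2) *
        (gaussianPdf 0 S (y - c • u) + gaussianPdf 0 S (y + c • u)) := by
  have hplus : y + c • u = y - (-c) • u := by rw [neg_smul, sub_neg_eq_add]
  rw [hplus, gaussianPdf_sub_smul hS, gaussianPdf_sub_smul hS]
  calc gaussianPdf 0 S y * Real.exp |c * (u ⬝ᵥ S⁻¹ *ᵥ y)|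
      ≤ gaussianPdf 0 S y * (Real.exp (c * (u ⬝ᵥ S⁻¹ *ᵥ y)) + Real.exp (-(c * (u ⬝ᵥ S⁻¹ *ᵥ y)))) :=
        mul_le_mul_of_nonneg_left (Real.exp_abs_le _) (gaussianPdf_nonneg S y)
    _ = _ := by simp only [Real.exp_sub, neg_mul, neg_sq]; field_simp

lemma abs_gaussianPdf_slope_le (hS : S.IsSymm) (y u : ι → ℝ) {r : ℝ} (hr0 : 0 < r)
    (hr1 : r ≤ 1) :
    |(gaussianPdf 0 S (y - r • u) - gaussianPdf 0 S y) / r| ≤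
      Real.exp (4 * |u ⬝ᵥ S⁻¹ *ᵥ u|) *
        (gaussianPdf 0 S (y - (2 : ℝ) • u) + gaussianPdf 0 S (y + (2 : ℝ) • u)) := by
  set w := u ⬝ᵥ S⁻¹ *ᵥ y
  set κ := u ⬝ᵥ S⁻¹ *ᵥ u
  have hexp : |Real.exp (r * w - r ^ 2 * κ / 2) - 1| ≤ r * Real.exp (2 * (|w| + |κ|)) := by
    refine Real.abs_exp_sub_one_le_mul_exp (by positivity) hr0.le hr1 ?_
    calc |r * w - r ^ 2 * κ / 2| ≤ r * |w| + r ^ 2 * |κ| / 2 := by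
          refine (abs_sub _ _).trans ?_
          rw [abs_mul, abs_div, abs_mul, abs_of_pos hr0, abs_of_nonneg (sq_nonneg r), abs_two]
      _ ≤ r * (|w| + |κ|) := by
          nlinarith [mul_nonneg (mul_nonneg hr0.le (sub_nonneg.2 hr1)) (abs_nonneg κ),
            mul_nonneg (sq_nonneg r) (abs_nonneg κ)]
  have hφ := gaussianPdf_nonneg S y
  rw [gaussianPdf_sub_smul hS, ← mul_sub_one, abs_div, abs_mul, abs_of_nonneg hφ,
    abs_of_pos hr0, div_le_iff₀ hr0]
  calc gaussianPdf 0 S y * |Real.exp (r * w - r ^ 2 * κ / 2) - 1|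
      ≤ gaussianPdf 0 S y * (r * Real.exp (2 * (|w| + |κ|))) := by gcongr
    _ = Real.exp (2 * |κ|) * (gaussianPdf 0 S y * Real.exp |2 * w|) * r := by
        rw [abs_mul, abs_two, mul_add, Real.exp_add]; ring
    _ ≤ Real.exp (2 * |κ|) * (Real.exp (2 ^ 2 * κ / 2) *
          (gaussianPdf 0 S (y - (2 : ℝ) • u) + gaussianPdf 0 S (y + (2 : ℝ) • u))) * r := by
        gcongr _ * ?_ * _
        exact gaussianPdf_mul_exp_abs_le hS y u 2
    _ ≤ _ := by
        rw [← mul_assoc, ← Real.exp_add]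
        have := add_nonneg (gaussianPdf_nonneg S (y - (2 : ℝ) • u))
          (gaussianPdf_nonneg S (y + (2 : ℝ) • u))
        gcongr
        linarith [le_abs_self κ]

lemma tendsto_gaussianPdf_slope (hS : S.IsSymm) (y u : ι → ℝ) :
    Tendsto (fun r => (gaussianPdf 0 S (y - r • u) - gaussianPdf 0 S y) / r) (𝓝[>] 0)
      (𝓝 ((u ⬝ᵥ S⁻¹ *ᵥ y) * gaussianPdf 0 S y)) := by
  have hderiv := ((((hasDerivAt_id (0 : ℝ)).mul_const (u ⬝ᵥ S⁻¹ *ᵥ y)).sub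
    (((hasDerivAt_pow 2 (0 : ℝ)).mul_const (u ⬝ᵥ S⁻¹ *ᵥ u)).div_const 2)).exp).const_mul
      (gaussianPdf 0 S y)
  convert hderiv.tendsto_slope_zero_right using 2 with r
  · simp [gaussianPdf_sub_smul hS, div_eq_inv_mul]
  · simp; ring

/- Null-measurability is what is available for `A + [-r,r]v`, which need not be Borel even when
`A` is. -/
theorem tendsto_gaussianMeasure_slope (hSsymm : S.IsSymm) (hS : S.PosDef) (u : ι → ℝ)
    {A : Set (ι → ℝ)} {D : ℝ → Set (ι → ℝ)} (hA : NullMeasurableSet A)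
    (hD : ∀ r, NullMeasurableSet (D r)) (hDA : ∀ᵐ y, ∀ᶠ r in 𝓝[>] 0, y ∈ D r ↔ y ∈ A) :
    Tendsto (fun r => (gaussianMeasure 0 S ((· + r • u) ⁻¹' D r) - gaussianMeasure 0 S (D r)) /
        ENNReal.ofReal r) (𝓝[>] 0)
      (𝓝 (ENNReal.ofReal (∫ y in A, (u ⬝ᵥ S⁻¹ *ᵥ y) * gaussianPdf 0 S y))) := by
  have hφ := integrable_gaussianPdf hS
  have hslope := tendsto_setIntegral_of_dominated
    (F := fun r y => (gaussianPdf 0 S (y - r • u) - gaussianPdf 0 S y) / r)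
    (fun y => Real.exp (4 * |u ⬝ᵥ S⁻¹ *ᵥ u|) *
      (gaussianPdf 0 S (y - (2 : ℝ) • u) + gaussianPdf 0 S (y + (2 : ℝ) • u)))
    (Eventually.of_forall fun r => by
      have := continuous_gaussianPdf S
      exact Continuous.aestronglyMeasurable (by fun_prop))
    (Eventually.of_forall hD) hA
    (((hφ.comp_sub_right _).add (hφ.comp_add_right _)).const_mul _)
    (eventually_of_mem (Ioc_mem_nhdsGT one_pos) fun r hr =>
      Eventually.of_forall fun y => abs_gaussianPdf_slope_le hSsymm y u hr.1 hr.2)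
    (Eventually.of_forall fun y => tendsto_gaussianPdf_slope hSsymm y u) hDA
  refine (ENNReal.tendsto_ofReal hslope).congr' ?_
  filter_upwards [self_mem_nhdsWithin] with r hr
  rw [gaussianMeasure, withDensity_ofReal_preimage_add_right_sub hφ (gaussianPdf_nonneg S),
    ← ENNReal.ofReal_div_of_pos hr, integral_div]

theorem tendsto_thicken_slope_gaussianMeasure (hSsymm : S.IsSymm) (hS : S.PosDef)
    {A : Set (ι → ℝ)} (v w u : ι → ℝ) (hA : volume (frontier A) = 0)
    (hAv : ∀ r, volume (frontier (thicken A v r)) = 0)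
    (hAw : ∀ r, 0 ≤ r → thicken A w r = (· + r • u) ⁻¹' A)
    (hAvw : ∀ r, 0 ≤ r → thicken (thicken A v r) w r = (· + r • u) ⁻¹' thicken A v r) :
    Tendsto (fun r => (gaussianMeasure 0 S (thicken (thicken A v r) w r) -
        gaussianMeasure 0 S (thicken A v r)) / ENNReal.ofReal r) (𝓝[>] 0)
      (𝓝 (influence (gaussianMeasure 0 S) w A)) := by
  have hA₀ := nullMeasurableSet_of_null_frontier hA
  have hslope := fun (D : ℝ → Set (ι → ℝ)) hD hDA =>
    tendsto_gaussianMeasure_slope (D := D) hSsymm hS u hA₀ hD hDA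
  have hinfluence : influence (gaussianMeasure 0 S) w A =
      ENNReal.ofReal (∫ y in A, (u ⬝ᵥ S⁻¹ *ᵥ y) * gaussianPdf 0 S y) := by
    refine ((hslope (fun _ => A) (fun _ => hA₀)
      (Eventually.of_forall fun _ => Eventually.of_forall fun _ => Iff.rfl)).congr' ?_).liminf_eq
    filter_upwards [self_mem_nhdsWithin] with r hr
    rw [hAw r (le_of_lt hr)]
  rw [hinfluence]
  refine (hslope (thicken A v) (fun r => nullMeasurableSet_of_null_frontier (hAv r)) ?_).congr' ?_
  · filter_upwards [measure_eq_zero_iff_ae_notMem.1 hA] with y hy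
      using eventually_mem_thicken_iff hy v
  · filter_upwards [self_mem_nhdsWithin] with r hr
    rw [hAvw r (le_of_lt hr)]

end Gaussian

theorem stmt_9_general (n : ℕ) (S : Matrix (Fin n) (Fin n) ℝ) (hSsymm : S.IsSymm)
    (hS : S.PosDef) (A : Set (Fin n → ℝ))
    (hA : IncreasingSet A ∨ DecreasingSet A) (v : Fin n → ℝ) (i : Fin n) :
    Filter.Tendsto
      (fun r : ℝ =>
        (gaussianMeasure 0 S (thicken (thicken A v r) (Pi.single i 1) r) -
            gaussianMeasure 0 S (thicken A v r)) / ENNReal.ofReal r)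
      (nhdsWithin 0 (Set.Ioi 0))
      (nhds (influence (gaussianMeasure 0 S) (Pi.single i 1) A)) := by
  have he : (0 : Fin n → ℝ) ≤ Pi.single i 1 := Pi.single_nonneg.2 zero_le_one
  rcases hA with hA | hA
  · have hA := hA.isUpperSet
    exact tendsto_thicken_slope_gaussianMeasure hSsymm hS v _ _ hA.null_frontier
      (fun r => (hA.thicken v r).null_frontier) (fun r hr => hA.thicken_eq_preimage he hr)
      (fun r hr => (hA.thicken v r).thicken_eq_preimage he hr)
  · have hA := hA.isLowerSet
    exact tendsto_thicken_slope_gaussianMeasure hSsymm hS v _ _ hA.null_frontier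
      (fun r => (hA.thicken v r).null_frontier) (fun r hr => hA.thicken_eq_preimage he hr)
      (fun r hr => (hA.thicken v r).thicken_eq_preimage he hr)

/-- For a Gaussian measure `μ = N(0,Σ)` and a monotone Borel set `A`, the limit
`lim_{r↓0} [μ(A + [−r,r]eᵢ + [−r,r]v) − μ(A + [−r,r]v)]/r` exists and equals the
influence `I_{i,μ}(A)`. -/
theorem stmt_9 (n : ℕ) (S : Matrix (Fin n) (Fin n) ℝ) (hSsymm : S.IsSymm)
    (hS : S.PosDef) (A : Set (Fin n → ℝ)) (hAmeas : MeasurableSet A)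
    (hA : IncreasingSet A ∨ DecreasingSet A) (v : Fin n → ℝ) (i : Fin n) :
    Filter.Tendsto
      (fun r : ℝ =>
        (gaussianMeasure 0 S (thicken (thicken A v r) (Pi.single i 1) r) -
            gaussianMeasure 0 S (thicken A v r)) / ENNReal.ofReal r)
      (nhdsWithin 0 (Set.Ioi 0))
      (nhds (influence (gaussianMeasure 0 S) (Pi.single i 1) A)) :=
  stmt_9_general n S hSsymm hS A hA v i
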